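/- Unbounded growth from a large occupied rectangle: there is a constant c > 0 (one may take any c large enough) such that for all sufficiently small p ∈ (0,1), if N₁ ≥ c·(1/p)·log(1/p) and N₂ ≥ c·(1/p²)·log(1/p), R is a fully occupied rectangle of height N₁ and width N₂, and the initial set is A₀ = R ∪ Π(p), then the ℙ_p-probability that ⟨A₀⟩ = ℤ² is at least ∏_{k=1}^{∞} (1 − (1−p²)^{N₂+k}) · (1 − (1−p)^{N₁+k}). -/

import Mathlib

open MeasureTheory Set

abbrev Site : Type := ℤ × ℤ
abbrev Config : Type := Site → Bool

def ggN : Set Site := {(1,0), (2,0), (-1,0), (-2,0), (0,1), (0,-1)}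

def ggT (A : Set Site) : Set Site :=
  A ∪ {x : Site | 3 ≤ (((x + ·) '' ggN) ∩ A).ncard}

def ggClosure (A : Set Site) : Set Site := ⋃ n : ℕ, ggT^[n] A

def ggTRes (V A : Set Site) : Set Site :=
  A ∪ {x : Site | x ∈ V ∧ 3 ≤ (((x + ·) '' ggN) ∩ A).ncard}

def ggClosureRes (V A : Set Site) : Set Site := ⋃ n : ℕ, (ggTRes V)^[n] A

def InternallySpanned (V A₀ : Set Site) : Prop :=
  ggClosureRes V (A₀ ∩ V) = V

def occupied (ω : Config) : Set Site := {x | ω x = true}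

def IsBernoulli (p : ℝ) (μ : Measure Config) : Prop :=
  IsProbabilityMeasure μ ∧
  ProbabilityTheory.iIndepFun (fun (x : Site) (ω : Config) => ω x) μ ∧
  ∀ x : Site, μ {ω | ω x = true} = ENNReal.ofReal p

/-
Grow the rectangle in stages. At stage `k` the current box has width `N₂ + k` and height `N₁ + k`;
it gains a row (above for even `k`, below for odd `k`) and then a column (right, resp. left).
A row is swept up once it contains two occupied sites at distance at most three: after the gap
between them is filled, every further site of the row has two occupied neighbours on one side in
the row and one in the box. A column needs a single occupied site, the two outer columns of the
box supplying the other two neighbours. Cutting the row into `⌊(N₂ + k) / 4⌋` blocks of four,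
each failing with probability `(1 - p)⁴ + 4p(1 - p)³ ≤ (1 - p²)⁵`, the row fails with probability
at most `(1 - p²)^(N₂ + k + 1)`; the column fails with probability `(1 - p)^(N₁ + k + 1)`. These
events depend on disjoint sets of sites, hence are independent, and on their intersection the
boxes exhaust `ℤ²`.
-/

open ProbabilityTheory

theorem Icc_subset_of_mem_of_spread {S : Set ℤ} {lo hi j : ℤ} (hj : j ∈ S)
    (hup : ∀ u, j ≤ u → u + 1 ≤ hi → u ∈ S → u + 1 ∈ S)
    (hdown : ∀ u, lo ≤ u - 1 → u ≤ j → u ∈ S → u - 1 ∈ S) : Icc lo hi ⊆ S := by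
  rintro u ⟨hlo, hhi⟩
  rcases le_total j u with hju | huj
  · clear hlo
    induction u, hju using Int.leInduction with
    | base => exact hj
    | succ u hju ih => exact hup u hju hhi (ih (by omega))
  · clear hhi
    induction u, huj using Int.leInductionDown with
    | base => exact hj
    | pred u huj ih => exact hdown u hlo huj (ih (by omega))

theorem Icc_subset_of_pair_mem_of_spread {S : Set ℤ} {lo hi j : ℤ} (hlo : lo ≤ j) (hhi : j < hi)
    (hj : j ∈ S) (hj' : j + 1 ∈ S)
    (hup : ∀ u, j ≤ u → u + 2 ≤ hi → u ∈ S → u + 1 ∈ S → u + 2 ∈ S)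
    (hdown : ∀ u, lo ≤ u - 1 → u ≤ j → u ∈ S → u + 1 ∈ S → u - 1 ∈ S) : Icc lo hi ⊆ S := by
  have hpairs : Icc lo (hi - 1) ⊆ {u | u ∈ S ∧ u + 1 ∈ S} :=
    Icc_subset_of_mem_of_spread (j := j) ⟨hj, hj'⟩
      (fun u hju hu ⟨h₀, h₁⟩ => ⟨h₁, by simpa [add_assoc] using hup u hju (by omega) h₀ h₁⟩)
      (fun u hu huj ⟨h₀, h₁⟩ => ⟨hdown u hu huj h₀ h₁, by simpa using h₀⟩)
  rintro u ⟨h₁, h₂⟩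
  rcases lt_or_eq_of_le h₂ with h | rfl
  · exact (hpairs ⟨h₁, by omega⟩).1
  · simpa using (hpairs ⟨by omega, le_rfl⟩).2

theorem mem_ggN_iff {d : Site} :
    d ∈ ggN ↔ (d.2 = 0 ∧ d.1 ≠ 0 ∧ -2 ≤ d.1 ∧ d.1 ≤ 2) ∨ (d.1 = 0 ∧ (d.2 = 1 ∨ d.2 = -1)) := by
  obtain ⟨u, v⟩ := d
  simp only [ggN, mem_insert_iff, mem_singleton_iff, Prod.mk.injEq]
  omega

theorem monotone_iterate_ggT (A : Set Site) : Monotone (ggT^[·] A) :=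
  monotone_nat_of_le_succ fun n => by
    rw [Function.iterate_succ_apply']
    exact subset_union_left

theorem subset_ggClosure (A : Set Site) : A ⊆ ggClosure A :=
  fun _ hx => mem_iUnion.2 ⟨0, hx⟩

def IsGGClosed (C : Set Site) : Prop := ggT C ⊆ C

theorem finite_ggN : ggN.Finite := by
  simp [ggN]

theorem finite_nbhd_inter (x : Site) (C : Set Site) : ((x + ·) '' ggN ∩ C).Finite :=
  (finite_ggN.image _).inter_of_left C

theorem isGGClosed_ggClosure (A : Set Site) : IsGGClosed (ggClosure A) := by
  rintro x (hx | hx)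
  · exact hx
  obtain ⟨y₁, y₂, y₃, ⟨hn₁, hy₁⟩, ⟨hn₂, hy₂⟩, ⟨hn₃, hy₃⟩, h₁₂, h₁₃, h₂₃⟩ :=
    (two_lt_ncard_iff (finite_nbhd_inter x _)).1 hx
  obtain ⟨n₁, hy₁⟩ := mem_iUnion.1 hy₁
  obtain ⟨n₂, hy₂⟩ := mem_iUnion.1 hy₂
  obtain ⟨n₃, hy₃⟩ := mem_iUnion.1 hy₃
  have hmono := monotone_iterate_ggT A
  refine mem_iUnion.2 ⟨max n₁ (max n₂ n₃) + 1, ?_⟩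
  rw [Function.iterate_succ_apply']
  refine Or.inr ((two_lt_ncard_iff (finite_nbhd_inter x _)).2 ⟨y₁, y₂, y₃,
    ⟨hn₁, hmono (by omega) hy₁⟩, ⟨hn₂, hmono (by omega) hy₂⟩, ⟨hn₃, hmono (by omega) hy₃⟩,
    h₁₂, h₁₃, h₂₃⟩)

namespace IsGGClosed

variable {C : Set Site}

theorem mem_of_neighbours (hC : IsGGClosed C) {u v a₁ a₂ w : ℤ}
    (ha₁ : a₁ ≠ u ∧ u - 2 ≤ a₁ ∧ a₁ ≤ u + 2) (ha₂ : a₂ ≠ u ∧ u - 2 ≤ a₂ ∧ a₂ ≤ u + 2)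
    (ha : a₁ ≠ a₂) (hw : w = v + 1 ∨ w = v - 1)
    (h₁ : (a₁, v) ∈ C) (h₂ : (a₂, v) ∈ C) (h₃ : (u, w) ∈ C) : (u, v) ∈ C := by
  have hnbhd : ∀ y : Site, y - (u, v) ∈ ggN → y ∈ ((u, v) + ·) '' ggN :=
    fun y hy => ⟨y - (u, v), hy, add_sub_cancel _ _⟩
  refine hC (Or.inr ((two_lt_ncard_iff (finite_nbhd_inter _ C)).2 ⟨(a₁, v), (a₂, v), (u, w),
    ⟨hnbhd _ ?_, h₁⟩, ⟨hnbhd _ ?_, h₂⟩, ⟨hnbhd _ ?_, h₃⟩, ?_, ?_, ?_⟩)) <;>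
  simp only [mem_ggN_iff, Prod.mk_sub_mk, ne_eq, Prod.mk.injEq] <;> omega

theorem Icc_add_row (hC : IsGGClosed C) {x₁ x₂ y₁ y₂ y j j' : ℤ}
    (hbox : Icc (x₁, y₁) (x₂, y₂) ⊆ C) (hy₁₂ : y₁ ≤ y₂) (hy : y = y₂ + 1 ∨ y = y₁ - 1)
    (hj : x₁ ≤ j) (hjj' : j < j') (hj'j : j' ≤ j + 3) (hj' : j' ≤ x₂)
    (h : (j, y) ∈ C) (h' : (j', y) ∈ C) : Icc (x₁, min y₁ y) (x₂, max y₂ y) ⊆ C := by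
  obtain ⟨y₀, hy₀, hyy₀⟩ : ∃ y₀, (y₁ ≤ y₀ ∧ y₀ ≤ y₂) ∧ (y₀ = y + 1 ∨ y₀ = y - 1) := by
    rcases hy with rfl | rfl
    exacts [⟨y₂, by omega⟩, ⟨y₁, by omega⟩]
  have hsupport : ∀ u, x₁ ≤ u → u ≤ x₂ → (u, y₀) ∈ C := fun u h₁ h₂ =>
    hbox ⟨⟨h₁, hy₀.1⟩, ⟨h₂, hy₀.2⟩⟩
  have hnext : (j + 1, y) ∈ C := by
    rcases eq_or_ne j' (j + 1) with rfl | hne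
    · exact h'
    · exact hC.mem_of_neighbours (by omega) (by omega) (by omega) hyy₀ h h'
        (hsupport _ (by omega) (by omega))
  have hrow : Icc x₁ x₂ ⊆ {u | (u, y) ∈ C} :=
    Icc_subset_of_pair_mem_of_spread hj (by omega) h hnext
      (fun u _ hu h₀ h₁ => hC.mem_of_neighbours (by omega) (by omega) (by omega) hyy₀ h₀ h₁
        (hsupport _ (by omega) hu))
      (fun u hu _ h₀ h₁ => hC.mem_of_neighbours (by omega) (by omega) (by omega) hyy₀ h₀ h₁
        (hsupport _ hu (by omega)))
  rintro ⟨u, v⟩ ⟨⟨hu₁, hv₁⟩, hu₂, hv₂⟩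
  rcases eq_or_ne v y with rfl | hvy
  · exact hrow ⟨hu₁, hu₂⟩
  · exact hbox ⟨⟨hu₁, by omega⟩, hu₂, by omega⟩

theorem Icc_add_col (hC : IsGGClosed C) {x₁ x₂ y₁ y₂ x v : ℤ}
    (hbox : Icc (x₁, y₁) (x₂, y₂) ⊆ C) (hx₁₂ : x₁ < x₂) (hx : x = x₂ + 1 ∨ x = x₁ - 1)
    (hv₁ : y₁ ≤ v) (hv₂ : v ≤ y₂) (h : (x, v) ∈ C) : Icc (min x₁ x, y₁) (max x₂ x, y₂) ⊆ C := by
  obtain ⟨a₁, a₂, ha, hxa⟩ : ∃ a₁ a₂, (x₁ ≤ a₁ ∧ a₁ ≤ x₂ ∧ x₁ ≤ a₂ ∧ a₂ ≤ x₂) ∧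
      (a₁ = x - 1 ∧ a₂ = x - 2 ∨ a₁ = x + 1 ∧ a₂ = x + 2) := by
    rcases hx with rfl | rfl
    exacts [⟨x₂, x₂ - 1, by omega⟩, ⟨x₁, x₁ + 1, by omega⟩]
  have hsupport : ∀ w, y₁ ≤ w → w ≤ y₂ → (a₁, w) ∈ C ∧ (a₂, w) ∈ C := fun w h₁ h₂ =>
    ⟨hbox ⟨⟨ha.1, h₁⟩, ⟨ha.2.1, h₂⟩⟩, hbox ⟨⟨ha.2.2.1, h₁⟩, ⟨ha.2.2.2, h₂⟩⟩⟩
  have hcol : Icc y₁ y₂ ⊆ {w | (x, w) ∈ C} :=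
    Icc_subset_of_mem_of_spread h
      (fun w _ hw hxw => hC.mem_of_neighbours (by omega) (by omega) (by omega) (by omega)
        (hsupport (w + 1) (by omega) hw).1 (hsupport (w + 1) (by omega) hw).2 hxw)
      (fun w hw _ hxw => hC.mem_of_neighbours (by omega) (by omega) (by omega) (by omega)
        (hsupport (w - 1) hw (by omega)).1 (hsupport (w - 1) hw (by omega)).2 hxw)
  rintro ⟨u, w⟩ ⟨⟨hu₁, hw₁⟩, hu₂, hw₂⟩
  rcases eq_or_ne u x with rfl | hux
  · exact hcol ⟨hw₁, hw₂⟩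
  · exact hbox ⟨⟨by omega, hw₁⟩, by omega, hw₂⟩

end IsGGClosed

theorem dependsOn_mem_of_forall {ι β : Type*} {E : Set (ι → β)} {s : Set ι}
    (h : ∀ ⦃ω ω' : ι → β⦄, (∀ x ∈ s, ω x = ω' x) → ω ∈ E → ω' ∈ E) : DependsOn (· ∈ E) s :=
  fun _ _ hωω' => propext ⟨h hωω', h fun x hx => (hωω' x hx).symm⟩

theorem DependsOn.preimage_domRestrict_image {ι β : Type*} {E : Set (ι → β)} {s : Set ι}
    (h : DependsOn (· ∈ E) s) : s.domRestrict ⁻¹' (s.domRestrict '' E) = E := by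
  ext ω
  exact ⟨fun ⟨ω', hω', hωω'⟩ => (h fun x hx => congrFun hωω' ⟨x, hx⟩).mp hω',
    fun hω => ⟨ω, hω, rfl⟩⟩

theorem DependsOn.measurableSet {ι : Type*} {E : Set (ι → Bool)} {D : Finset ι}
    (h : DependsOn (· ∈ E) (D : Set ι)) : MeasurableSet E := by
  rw [← h.preimage_domRestrict_image]
  exact (measurable_pi_lambda _ fun x => measurable_pi_apply x.1) (toFinite _).measurableSet

theorem measure_inter_eq_mul_of_dependsOn {ι : Type*} {μ : Measure (ι → Bool)}
    (hind : iIndepFun (fun (x : ι) (ω : ι → Bool) => ω x) μ) {E F : Set (ι → Bool)}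
    {D₁ D₂ : Finset ι} (hE : DependsOn (· ∈ E) (D₁ : Set ι))
    (hF : DependsOn (· ∈ F) (D₂ : Set ι)) (hD : Disjoint D₁ D₂) : μ (E ∩ F) = μ E * μ F := by
  rw [← hE.preimage_domRestrict_image, ← hF.preimage_domRestrict_image]
  exact (hind.indepFun_finset D₁ D₂ hD fun x => measurable_pi_apply x).measure_inter_preimage_eq_mul
    _ _ (toFinite _).measurableSet (toFinite _).measurableSet

theorem measure_biInter_eq_prod_of_dependsOn {ι κ : Type*} {μ : Measure (ι → Bool)}
    [IsProbabilityMeasure μ] (hind : iIndepFun (fun (x : ι) (ω : ι → Bool) => ω x) μ)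
    (s : Finset κ) {E : κ → Set (ι → Bool)} {D : κ → Finset ι}
    (hE : ∀ i, DependsOn (· ∈ E i) (D i : Set ι)) (hD : (s : Set κ).PairwiseDisjoint D) :
    μ (⋂ i ∈ s, E i) = ∏ i ∈ s, μ (E i) := by
  classical
  induction s using Finset.induction_on with
  | empty => simp
  | insert i s hi ih =>
    have hdep : DependsOn (· ∈ ⋂ j ∈ s, E j) (s.biUnion D : Set ι) :=
      dependsOn_mem_of_forall fun ω ω' hωω' hω => mem_iInter₂.2 fun j hj =>
        (hE j fun x hx => hωω' x (Finset.mem_biUnion.2 ⟨j, hj, hx⟩)).mp (mem_iInter₂.1 hω j hj)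
    have hdisj : Disjoint (D i) (s.biUnion D) := (Finset.disjoint_biUnion_right _ _ _).2 fun j hj =>
      hD (by simp) (by simp [hj]) (ne_of_mem_of_not_mem hj hi).symm
    rw [Finset.set_biInter_insert, Finset.prod_insert hi,
      measure_inter_eq_mul_of_dependsOn hind (hE i) hdep hdisj,
      ih (hD.subset (by simp))]

theorem ofReal_one_sub_le_measure {Ω : Type*} [MeasurableSpace Ω] {μ : Measure Ω}
    [IsProbabilityMeasure μ] {E : Set Ω} (hE : MeasurableSet E) {r : ℝ} (hr : 0 ≤ r)
    (h : μ Eᶜ ≤ ENNReal.ofReal r) : ENNReal.ofReal (1 - r) ≤ μ E := by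
  rw [ENNReal.ofReal_sub _ hr, ENNReal.ofReal_one, ← compl_compl E,
    prob_compl_eq_one_sub hE.compl]
  exact tsub_le_tsub_left h 1

theorem tprod_le_prod_of_le_one {t : ℕ → ℝ} (h₀ : ∀ k, 0 ≤ t k) (h₁ : ∀ k, t k ≤ 1)
    (s : Finset ℕ) : ∏' k, t k ≤ ∏ k ∈ s, t k := by
  have hbdd : BddBelow (range fun s : Finset ℕ => ∏ k ∈ s, t k) :=
    ⟨0, by rintro _ ⟨s, rfl⟩; exact Finset.prod_nonneg fun k _ => h₀ k⟩
  have hprod : HasProd t (⨅ s : Finset ℕ, ∏ k ∈ s, t k) :=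
    tendsto_atTop_ciInf (Finset.prod_anti_set_of_le_one h₀ h₁) hbdd
  rw [hprod.tprod_eq]
  exact ciInf_le hbdd s

theorem ofReal_tprod_le_measure_iInter_of_dependsOn {ι : Type*} {μ : Measure (ι → Bool)}
    [IsProbabilityMeasure μ] (hind : iIndepFun (fun (x : ι) (ω : ι → Bool) => ω x) μ)
    {E : ℕ → Set (ι → Bool)} {D : ℕ → Finset ι} (hE : ∀ k, DependsOn (· ∈ E k) (D k : Set ι))
    (hD : Pairwise (Function.onFun Disjoint D)) {t : ℕ → ℝ} (h₀ : ∀ k, 0 ≤ t k)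
    (h₁ : ∀ k, t k ≤ 1) (ht : ∀ k, ENNReal.ofReal (t k) ≤ μ (E k)) :
    ENNReal.ofReal (∏' k, t k) ≤ μ (⋂ k, E k) := by
  have hanti : Antitone fun s : Finset ℕ => ⋂ k ∈ s, E k :=
    fun _ _ h => biInter_subset_biInter_left h
  rw [iInter_eq_iInter_finset, hanti.measure_iInter
    (fun s => (Finset.measurableSet_biInter s fun k _ => (hE k).measurableSet).nullMeasurableSet)
    ⟨∅, measure_ne_top _ _⟩]
  refine le_iInf fun s => ?_
  rw [measure_biInter_eq_prod_of_dependsOn hind s hE (hD.set_pairwise _)]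
  calc ENNReal.ofReal (∏' k, t k)
      ≤ ENNReal.ofReal (∏ k ∈ s, t k) := ENNReal.ofReal_le_ofReal (tprod_le_prod_of_le_one h₀ h₁ s)
    _ = ∏ k ∈ s, ENNReal.ofReal (t k) := ENNReal.ofReal_prod_of_nonneg fun k _ => h₀ k
    _ ≤ ∏ k ∈ s, μ (E k) := Finset.prod_le_prod' fun k _ => ht k

theorem one_sub_pow_mem_unitInterval {x : ℝ} (h₀ : 0 ≤ x) (h₁ : x ≤ 1) (n : ℕ) :
    1 - x ^ n ∈ unitInterval :=
  ⟨sub_nonneg.2 (pow_le_one₀ h₀ h₁), sub_le_self _ (pow_nonneg h₀ n)⟩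

theorem ENNReal.one_sub_ofReal {p : ℝ} (hp : 0 ≤ p) :
    1 - ENNReal.ofReal p = ENNReal.ofReal (1 - p) := by
  rw [ENNReal.ofReal_sub _ hp, ENNReal.ofReal_one]

theorem one_sub_pow_four_add_le {p : ℝ} (h0 : 0 ≤ p) (h1 : p ≤ 1 / 10) :
    (1 - p) ^ 4 + 4 * (p * (1 - p) ^ 3) ≤ (1 - p ^ 2) ^ 5 := by
  have hdiff : (1 - p ^ 2) ^ 5 - ((1 - p) ^ 4 + 4 * (p * (1 - p) ^ 3)) =
      p ^ 2 * (1 - 8 * p + 13 * p ^ 2 - 10 * p ^ 4 + 5 * p ^ 6 - p ^ 8) := by ring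
  have hinner : 0 ≤ 1 - 8 * p + 13 * p ^ 2 - 10 * p ^ 4 + 5 * p ^ 6 - p ^ 8 := by
    nlinarith [pow_le_pow_left₀ h0 h1 4, pow_le_pow_left₀ h0 h1 8, sq_nonneg p, pow_nonneg h0 6]
  nlinarith [mul_nonneg (sq_nonneg p) hinner]

def closePairEvent (x₁ x₂ y : ℤ) : Set Config :=
  {ω | ∃ j j', x₁ ≤ j ∧ j < j' ∧ j' ≤ j + 3 ∧ j' ≤ x₂ ∧ ω (j, y) = true ∧ ω (j', y) = true}

def someOccupied (D : Finset Site) : Set Config := {ω | ∃ x ∈ D, ω x = true}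

def atMostOneOccupied (D : Finset Site) : Set Config :=
  {ω | ∀ x ∈ D, ∀ y ∈ D, ω x = true → ω y = true → x = y}

theorem dependsOn_someOccupied (D : Finset Site) :
    DependsOn (· ∈ someOccupied D) (D : Set Site) :=
  dependsOn_mem_of_forall fun _ _ h ⟨x, hx, hωx⟩ => ⟨x, hx, (h x hx).symm.trans hωx⟩

theorem dependsOn_atMostOneOccupied (D : Finset Site) :
    DependsOn (· ∈ atMostOneOccupied D) (D : Set Site) :=
  dependsOn_mem_of_forall fun _ _ h hω x hx y hy hωx hωy =>
    hω x hx y hy ((h x hx).trans hωx) ((h y hy).trans hωy)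

theorem dependsOn_closePairEvent (x₁ x₂ y : ℤ) :
    DependsOn (· ∈ closePairEvent x₁ x₂ y) (Finset.Icc (x₁, y) (x₂, y) : Set Site) :=
  dependsOn_mem_of_forall fun _ _ h ⟨j, j', h₁, h₂, h₃, h₄, hj, hj'⟩ =>
    have hmem : ∀ i, x₁ ≤ i → i ≤ x₂ → ((i, y) : Site) ∈ (Finset.Icc (x₁, y) (x₂, y) : Set Site) :=
      fun i hi hi' => by simp only [Finset.coe_Icc, mem_Icc, Prod.mk_le_mk]; omega
    ⟨j, j', h₁, h₂, h₃, h₄, (h _ (hmem j h₁ (by omega))).symm.trans hj,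
      (h _ (hmem j' (by omega) h₄)).symm.trans hj'⟩

noncomputable def rowBlock (x y : ℤ) (i : ℕ) : Finset Site :=
  Finset.Icc (x + 4 * i, y) (x + 4 * i + 3, y)

theorem card_rowBlock (x y : ℤ) (i : ℕ) : (rowBlock x y i).card = 4 := by
  simp only [rowBlock, Finset.card_Icc_prod, Int.card_Icc, add_sub_cancel_left, Int.toNat_one,
    mul_one]
  omega

theorem pairwiseDisjoint_rowBlock (x y : ℤ) (s : Set ℕ) : s.PairwiseDisjoint (rowBlock x y) :=
  fun i _ j _ hij => Finset.disjoint_left.2 fun z hi hj => by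
    simp only [rowBlock, Finset.mem_Icc, Prod.le_def] at hi hj
    omega

theorem compl_closePairEvent_subset (x y : ℤ) (W : ℕ) :
    (closePairEvent x (x + W - 1) y)ᶜ ⊆
      ⋂ i ∈ Finset.range (W / 4), atMostOneOccupied (rowBlock x y i) := by
  intro ω hω
  refine mem_iInter₂.2 fun i hi ⟨s₁, s₂⟩ hs ⟨t₁, t₂⟩ ht hωs hωt => ?_
  simp only [rowBlock, Finset.mem_Icc, Prod.mk_le_mk, Finset.mem_range] at hs ht hi
  obtain rfl : s₂ = y := by omega
  obtain rfl : t₂ = s₂ := by omega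
  by_contra hst
  rcases lt_or_gt_of_ne (show s₁ ≠ t₁ by rintro rfl; exact hst rfl) with h | h
  · exact hω ⟨s₁, t₁, by omega, h, by omega, by omega, hωs, hωt⟩
  · exact hω ⟨t₁, s₁, by omega, h, by omega, by omega, hωt, hωs⟩

section Bernoulli

variable {p : ℝ} {μ : Measure Config}

theorem measure_cylinder (hμ : IsBernoulli p μ) (D : Finset Site) (g : Site → Bool) :
    μ {ω | ∀ x ∈ D, ω x = g x} =
      ∏ x ∈ D, if g x then ENNReal.ofReal p else 1 - ENNReal.ofReal p := by
  have := hμ.1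
  have hset : {ω : Config | ∀ x ∈ D, ω x = g x} = ⋂ x ∈ D, (fun ω : Config => ω x) ⁻¹' {g x} := by
    ext ω
    simp
  rw [hset, hμ.2.1.measure_inter_preimage_eq_mul D fun _ _ => trivial]
  refine Finset.prod_congr rfl fun x _ => ?_
  have htrue : (fun ω : Config => ω x) ⁻¹' {true} = {ω | ω x = true} := rfl
  cases g x
  · rw [if_neg Bool.false_ne_true, ← hμ.2.2 x, ← htrue,
      ← prob_compl_eq_one_sub (measurable_pi_apply x (measurableSet_singleton true))]
    congr 1
    ext ω
    simp
  · rw [if_pos rfl, htrue, hμ.2.2 x]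

theorem measure_atMostOneOccupied_le (hμ : IsBernoulli p μ) (D : Finset Site) :
    μ (atMostOneOccupied D) ≤ (1 - ENNReal.ofReal p) ^ D.card +
      D.card * (ENNReal.ofReal p * (1 - ENNReal.ofReal p) ^ (D.card - 1)) := by
  classical
  have hsub : atMostOneOccupied D ⊆ {ω | ∀ x ∈ D, ω x = false} ∪
      ⋃ y ∈ D, {ω | ∀ x ∈ D, ω x = decide (x = y)} := by
    intro ω hω
    by_cases h : ∃ y ∈ D, ω y = true
    · obtain ⟨y, hy, hωy⟩ := h
      refine Or.inr (mem_biUnion hy fun x hx => ?_)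
      by_cases hxy : x = y
      · simp [hxy, hωy]
      · simpa [hxy] using mt (hω x hx y hy · hωy) hxy
    · push Not at h
      exact Or.inl fun x hx => by simpa using h x hx
  have hone : ∀ y ∈ D, μ {ω | ∀ x ∈ D, ω x = decide (x = y)} =
      ENNReal.ofReal p * (1 - ENNReal.ofReal p) ^ (D.card - 1) := fun y hy => by
    rw [measure_cylinder hμ, Finset.prod_ite]
    simp [Finset.filter_eq', Finset.filter_ne', hy, Finset.card_erase_of_mem]
  calc μ (atMostOneOccupied D)
      ≤ μ {ω | ∀ x ∈ D, ω x = false} + ∑ y ∈ D, μ {ω | ∀ x ∈ D, ω x = decide (x = y)} :=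
        (measure_mono hsub).trans ((measure_union_le _ _).trans
          (add_le_add_right (measure_biUnion_finset_le _ _) _))
    _ = _ := by
        rw [measure_cylinder hμ, Finset.sum_congr rfl hone]
        simp

theorem measure_atMostOneOccupied_le_of_card_eq_four (hμ : IsBernoulli p μ) (hp : 0 ≤ p)
    (hp' : p ≤ 1 / 10) {D : Finset Site} (hD : D.card = 4) :
    μ (atMostOneOccupied D) ≤ ENNReal.ofReal ((1 - p ^ 2) ^ 5) := by
  refine (measure_atMostOneOccupied_le hμ D).trans (le_of_eq_of_le ?_
    (ENNReal.ofReal_le_ofReal (one_sub_pow_four_add_le hp hp')))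
  have h1p : 0 ≤ 1 - p := by linarith
  rw [hD, ENNReal.one_sub_ofReal hp, ENNReal.ofReal_add (by positivity) (by positivity),
    ENNReal.ofReal_mul (by norm_num), ENNReal.ofReal_mul hp, ENNReal.ofReal_pow h1p,
    ENNReal.ofReal_pow h1p]
  norm_num

theorem ofReal_le_measure_someOccupied (hμ : IsBernoulli p μ) (hp : 0 ≤ p) (hp' : p ≤ 1)
    (D : Finset Site) : ENNReal.ofReal (1 - (1 - p) ^ D.card) ≤ μ (someOccupied D) := by
  have := hμ.1
  have hcompl : (someOccupied D)ᶜ = {ω | ∀ x ∈ D, ω x = false} := by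
    ext ω
    simp [someOccupied]
  refine ofReal_one_sub_le_measure (dependsOn_someOccupied D).measurableSet
    (pow_nonneg (by linarith) _) (le_of_eq ?_)
  rw [hcompl, measure_cylinder hμ, ENNReal.one_sub_ofReal hp, ENNReal.ofReal_pow (by linarith)]
  simp

theorem ofReal_le_measure_closePairEvent (hμ : IsBernoulli p μ) (hp : 0 ≤ p) (hp' : p ≤ 1 / 10)
    (x y : ℤ) {W : ℕ} (hW : 16 ≤ W) :
    ENNReal.ofReal (1 - (1 - p ^ 2) ^ (W + 1)) ≤ μ (closePairEvent x (x + W - 1) y) := by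
  have := hμ.1
  have hq₀ : 0 ≤ 1 - p ^ 2 := by nlinarith
  have hq₁ : 1 - p ^ 2 ≤ 1 := by nlinarith
  refine ofReal_one_sub_le_measure (dependsOn_closePairEvent _ _ _).measurableSet
    (pow_nonneg hq₀ _) ?_
  calc μ (closePairEvent x (x + W - 1) y)ᶜ
      ≤ μ (⋂ i ∈ Finset.range (W / 4), atMostOneOccupied (rowBlock x y i)) :=
        measure_mono (compl_closePairEvent_subset x y W)
    _ = ∏ i ∈ Finset.range (W / 4), μ (atMostOneOccupied (rowBlock x y i)) :=
        measure_biInter_eq_prod_of_dependsOn hμ.2.1 _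
          (fun i => dependsOn_atMostOneOccupied _) (pairwiseDisjoint_rowBlock x y _)
    _ ≤ ∏ _i ∈ Finset.range (W / 4), ENNReal.ofReal ((1 - p ^ 2) ^ 5) :=
        Finset.prod_le_prod' fun i _ =>
          measure_atMostOneOccupied_le_of_card_eq_four hμ hp hp' (card_rowBlock x y i)
    _ = ENNReal.ofReal ((1 - p ^ 2) ^ (5 * (W / 4))) := by
        rw [Finset.prod_const, Finset.card_range, ← ENNReal.ofReal_pow (pow_nonneg hq₀ 5),
          ← pow_mul]
    _ ≤ ENNReal.ofReal ((1 - p ^ 2) ^ (W + 1)) :=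
        ENNReal.ofReal_le_ofReal (pow_le_pow_of_le_one hq₀ hq₁ (by omega))

end Bernoulli

section Stages

variable (c : ℤ) (N : ℕ)

-- `[stageLo c k, stageHi c N k]` has length `N + k`; stage `k` adds `stageNew c N k` to it,
-- above for even `k` and below for odd `k`.
def stageLo (k : ℕ) : ℤ := c - (k / 2 : ℕ)

def stageHi (k : ℕ) : ℤ := c + N - 1 + ((k + 1) / 2 : ℕ)

def stageNew (k : ℕ) : ℤ := if Even k then stageHi c N k + 1 else stageLo c k - 1

variable {c N}

theorem stageHi_eq (k : ℕ) : stageHi c N k = stageLo c k + (N + k : ℕ) - 1 := by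
  simp only [stageHi, stageLo]
  omega

theorem stageNew_eq (k : ℕ) :
    stageNew c N k = stageHi c N k + 1 ∨ stageNew c N k = stageLo c k - 1 := by
  unfold stageNew
  split_ifs <;> simp

theorem stageLo_succ (k : ℕ) : stageLo c (k + 1) = min (stageLo c k) (stageNew c N k) := by
  simp only [stageNew, stageLo, stageHi, Nat.even_iff]
  split_ifs <;> omega

theorem stageHi_succ (k : ℕ) : stageHi c N (k + 1) = max (stageHi c N k) (stageNew c N k) := by
  simp only [stageNew, stageLo, stageHi, Nat.even_iff]
  split_ifs <;> omega

theorem stageLo_antitone : Antitone (stageLo c) := fun k k' hk => by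
  simp only [stageLo]
  omega

theorem stageHi_monotone : Monotone (stageHi c N) := fun k k' hk => by
  simp only [stageHi]
  omega

end Stages

section StageBoxes

variable (a b : ℤ) (N₁ N₂ : ℕ)

def stageBox (k : ℕ) : Set Site :=
  Icc (stageLo a k, stageLo b k) (stageHi a N₂ k, stageHi b N₁ k)

noncomputable def rowRegion (k : ℕ) : Finset Site :=
  Finset.Icc (stageLo a k, stageNew b N₁ k) (stageHi a N₂ k, stageNew b N₁ k)

noncomputable def colRegion (k : ℕ) : Finset Site :=
  Finset.Icc (stageNew a N₂ k, stageLo b (k + 1)) (stageNew a N₂ k, stageHi b N₁ (k + 1))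

def stageEvent (k : ℕ) : Set Config :=
  closePairEvent (stageLo a k) (stageHi a N₂ k) (stageNew b N₁ k) ∩
    someOccupied (colRegion a b N₁ N₂ k)

noncomputable def stageRegion (k : ℕ) : Finset Site :=
  rowRegion a b N₁ N₂ k ∪ colRegion a b N₁ N₂ k

theorem exists_mem_stageBox (x : Site) : ∃ k, x ∈ stageBox a b N₁ N₂ k := by
  refine ⟨2 * ((x.1 - a).toNat + (a - x.1).toNat + (x.2 - b).toNat + (b - x.2).toNat + 1), ?_⟩
  simp only [stageBox, stageLo, stageHi, mem_Icc, Prod.le_def]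
  omega

variable {a b N₁ N₂}

theorem stageBox_mono : Monotone (stageBox a b N₁ N₂) := fun _ _ hk =>
  Icc_subset_Icc ⟨stageLo_antitone hk, stageLo_antitone hk⟩
    ⟨stageHi_monotone hk, stageHi_monotone hk⟩

theorem stageBox_succ_subset {C : Set Site} (hC : IsGGClosed C) (hN₁ : 1 ≤ N₁) (hN₂ : 2 ≤ N₂)
    {ω : Config} (hω : occupied ω ⊆ C) {k : ℕ} (hk : ω ∈ stageEvent a b N₁ N₂ k)
    (hbox : stageBox a b N₁ N₂ k ⊆ C) : stageBox a b N₁ N₂ (k + 1) ⊆ C := by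
  obtain ⟨⟨j, j', hj, hjj', hj'j, hj', h, h'⟩, ⟨u, v⟩, huv, hω'⟩ := hk
  rw [colRegion, Finset.mem_Icc, Prod.mk_le_mk, Prod.mk_le_mk] at huv
  obtain rfl : u = stageNew a N₂ k := by omega
  have hrow := hC.Icc_add_row hbox (by rw [stageHi_eq]; omega) (stageNew_eq k)
    hj hjj' hj'j hj' (hω h) (hω h')
  rw [← stageLo_succ, ← stageHi_succ] at hrow
  have hcol := hC.Icc_add_col hrow (by rw [stageHi_eq]; omega) (stageNew_eq k)
    huv.1.2 huv.2.2 (hω hω')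
  rwa [← stageLo_succ, ← stageHi_succ] at hcol

theorem ggClosure_eq_univ_of_forall_stageEvent (hN₁ : 1 ≤ N₁) (hN₂ : 2 ≤ N₂) {ω : Config}
    (hω : ∀ k, ω ∈ stageEvent a b N₁ N₂ k) :
    ggClosure (stageBox a b N₁ N₂ 0 ∪ occupied ω) = univ := by
  have hC := isGGClosed_ggClosure (stageBox a b N₁ N₂ 0 ∪ occupied ω)
  have hocc : occupied ω ⊆ ggClosure (stageBox a b N₁ N₂ 0 ∪ occupied ω) :=
    subset_union_right.trans (subset_ggClosure _)
  have hsub : ∀ k, stageBox a b N₁ N₂ k ⊆ ggClosure (stageBox a b N₁ N₂ 0 ∪ occupied ω) := by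
    intro k
    induction k with
    | zero => exact subset_union_left.trans (subset_ggClosure _)
    | succ k ih => exact stageBox_succ_subset hC hN₁ hN₂ hocc (hω k) ih
  refine eq_univ_of_forall fun x => ?_
  obtain ⟨k, hk⟩ := exists_mem_stageBox a b N₁ N₂ x
  exact hsub k hk

theorem disjoint_rowRegion_colRegion (k : ℕ) :
    Disjoint (rowRegion a b N₁ N₂ k) (colRegion a b N₁ N₂ k) :=
  Finset.disjoint_left.2 fun s hs ht => by
    simp only [rowRegion, colRegion, Finset.mem_Icc, Prod.le_def] at hs ht
    have := stageNew_eq (c := a) (N := N₂) k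
    omega

theorem card_colRegion (k : ℕ) : (colRegion a b N₁ N₂ k).card = N₁ + k + 1 := by
  simp only [colRegion, Finset.card_Icc_prod, Int.card_Icc, stageHi_eq (k + 1),
    add_sub_cancel_left, Int.toNat_one, one_mul]
  omega

theorem dependsOn_stageEvent (k : ℕ) :
    DependsOn (· ∈ stageEvent a b N₁ N₂ k) (stageRegion a b N₁ N₂ k : Set Site) :=
  dependsOn_mem_of_forall fun _ _ h ⟨hrow, hcol⟩ =>
    ⟨(dependsOn_closePairEvent _ _ _ fun x hx => h x (Finset.mem_union_left _ hx)).mp hrow,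
      (dependsOn_someOccupied _ fun x hx => h x (Finset.mem_union_right _ hx)).mp hcol⟩

theorem coe_stageRegion_subset (k : ℕ) :
    (stageRegion a b N₁ N₂ k : Set Site) ⊆ stageBox a b N₁ N₂ (k + 1) \ stageBox a b N₁ N₂ k := by
  rintro ⟨u, v⟩ h
  simp only [stageRegion, rowRegion, colRegion, stageBox, Finset.coe_union, Finset.coe_Icc,
    mem_union, mem_sdiff, mem_Icc, Prod.mk_le_mk, stageLo_succ (c := a) (N := N₂),
    stageLo_succ (c := b) (N := N₁), stageHi_succ] at h ⊢
  have := stageNew_eq (c := a) (N := N₂) k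
  have := stageNew_eq (c := b) (N := N₁) k
  have := stageHi_eq (c := a) (N := N₂) k
  have := stageHi_eq (c := b) (N := N₁) k
  omega

theorem pairwise_disjoint_stageRegion :
    Pairwise (Function.onFun Disjoint (stageRegion a b N₁ N₂)) := by
  intro k k' hkk'
  wlog h : k < k' generalizing k k'
  · exact (this hkk'.symm (by omega)).symm
  rw [Function.onFun, ← Finset.disjoint_coe]
  exact (disjoint_sdiff_right.mono_right (coe_stageRegion_subset k')).mono_left
    ((coe_stageRegion_subset k).trans (sdiff_subset.trans (stageBox_mono h)))

theorem ofReal_le_measure_stageEvent {p : ℝ} {μ : Measure Config} (hμ : IsBernoulli p μ)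
    (hp : 0 ≤ p) (hp' : p ≤ 1 / 10) (hN₂ : 16 ≤ N₂) (k : ℕ) :
    ENNReal.ofReal ((1 - (1 - p ^ 2) ^ (N₂ + k + 1)) * (1 - (1 - p) ^ (N₁ + k + 1))) ≤
      μ (stageEvent a b N₁ N₂ k) := by
  have hrow := ofReal_le_measure_closePairEvent hμ hp hp' (stageLo a k) (stageNew b N₁ k)
    (W := N₂ + k) (by omega)
  have hcol := ofReal_le_measure_someOccupied hμ hp (by linarith) (colRegion a b N₁ N₂ k)
  rw [← stageHi_eq] at hrow
  rw [card_colRegion] at hcol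
  rw [stageEvent, measure_inter_eq_mul_of_dependsOn hμ.2.1 (dependsOn_closePairEvent _ _ _)
    (dependsOn_someOccupied _) (disjoint_rowRegion_colRegion k),
    ENNReal.ofReal_mul (sub_nonneg.2 (pow_le_one₀ (by nlinarith) (by nlinarith)))]
  exact mul_le_mul' hrow hcol

end StageBoxes

theorem one_le_and_sixteen_le_of_log_bounds {p : ℝ} (hp : 0 < p) (hp₀ : p < 1 / 10)
    {N₁ N₂ : ℕ} (hN₁ : 1 * (1 / p) * Real.log (1 / p) ≤ N₁)
    (hN₂ : 1 * (1 / p ^ 2) * Real.log (1 / p) ≤ N₂) : 1 ≤ N₁ ∧ 16 ≤ N₂ := by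
  have hinv : 10 < 1 / p := by
    rw [lt_div_iff₀ hp]
    linarith
  have hlog : 1 ≤ Real.log (1 / p) :=
    (Real.le_log_iff_exp_le (by positivity)).2 (by linarith [Real.exp_one_lt_three])
  have h₁ : 1 / p ≤ N₁ := le_trans (by nlinarith) hN₁
  have h₂ : 1 / p ^ 2 ≤ N₂ := le_trans (by nlinarith [one_div_pow p 2]) hN₂
  constructor
  · exact_mod_cast (show (1 : ℝ) ≤ N₁ by linarith)
  · exact_mod_cast (show (16 : ℝ) ≤ N₂ by nlinarith [one_div_pow p 2])

theorem gg_unbounded_growth_from_rectangle :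
    ∃ c : ℝ, 0 < c ∧ ∃ p₀ : ℝ, 0 < p₀ ∧
      ∀ p : ℝ, 0 < p → p < p₀ →
        ∀ N₁ N₂ : ℕ,
          c * (1/p) * Real.log (1/p) ≤ (N₁ : ℝ) →
          c * (1/p^2) * Real.log (1/p) ≤ (N₂ : ℝ) →
          ∀ a b : ℤ, ∀ μ : Measure Config, IsBernoulli p μ →
            ENNReal.ofReal
                (∏' k : ℕ, ((1 - (1-p^2)^(N₂+k+1)) * (1 - (1-p)^(N₁+k+1)))) ≤
              μ {ω | ggClosure
                  ((Set.Icc a (a+(N₂:ℤ)-1) ×ˢ Set.Icc b (b+(N₁:ℤ)-1)) ∪ occupied ω)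
                  = Set.univ} := by
  refine ⟨1, one_pos, 1 / 10, by norm_num, fun p hp hp₀ N₁ N₂ hN₁ hN₂ a b μ hμ => ?_⟩
  have := hμ.1
  obtain ⟨hN₁', hN₂'⟩ := one_le_and_sixteen_le_of_log_bounds hp hp₀ hN₁ hN₂
  have hfactor : ∀ k, (1 - (1 - p ^ 2) ^ (N₂ + k + 1)) * (1 - (1 - p) ^ (N₁ + k + 1)) ∈
      unitInterval := fun k =>
    unitInterval.mul_mem (one_sub_pow_mem_unitInterval (by nlinarith) (by nlinarith) _)
      (one_sub_pow_mem_unitInterval (by linarith) (by linarith) _)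
  have hbox : Set.Icc a (a + (N₂ : ℤ) - 1) ×ˢ Set.Icc b (b + (N₁ : ℤ) - 1) =
      stageBox a b N₁ N₂ 0 := by
    simp [stageBox, stageLo, stageHi, Icc_prod_Icc]
  calc _ ≤ μ (⋂ k, stageEvent a b N₁ N₂ k) :=
        ofReal_tprod_le_measure_iInter_of_dependsOn hμ.2.1 dependsOn_stageEvent
          pairwise_disjoint_stageRegion
          (fun k => (hfactor k).1) (fun k => (hfactor k).2)
          (ofReal_le_measure_stageEvent hμ hp.le hp₀.le hN₂')
    _ ≤ _ := measure_mono fun ω hω => by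
        rw [hbox]
        exact ggClosure_eq_univ_of_forall_stageEvent hN₁' (by omega) (mem_iInter.1 hω)
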